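/- Define: a compact Hausdorff space X is weakly infinite-dimensional if for any sequence of pairs (Fᵢ, Hᵢ) of disjoint closed subsets of X there exist partitions Lᵢ between Fᵢ and Hᵢ with ⋂ᵢ Lᵢ = ∅. Theorem: if C(X; ℝ) has weakly infinite real rank, then X is weakly infinite-dimensional. -/

import Mathlib

/-- `L` is a partition between `F` and `H`: a closed set whose complement splits into
disjoint open sets containing `F` and `H` respectively. -/
def IsPartitionBetween {X : Type*} [TopologicalSpace X] (L F H : Set X) : Prop :=
  IsClosed L ∧ ∃ U V : Set X, IsOpen U ∧ IsOpen V ∧ U ∩ V = ∅ ∧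
    F ⊆ U ∧ H ⊆ V ∧ Lᶜ = U ∪ V

/-- A space is weakly infinite-dimensional if every sequence of pairs of disjoint
closed sets admits partitions with empty intersection. -/
def WeaklyInfiniteDimensional (X : Type*) [TopologicalSpace X] : Prop :=
  ∀ F H : ℕ → Set X,
    (∀ i, IsClosed (F i) ∧ IsClosed (H i) ∧ F i ∩ H i = ∅) →
    ∃ L : ℕ → Set X, (∀ i, IsPartitionBetween (L i) (F i) (H i)) ∧ (⋂ i, L i) = ∅

/-- `C(X, ℝ)` has weakly infinite real rank (self-adjointness is automatic). -/
def WeaklyInfiniteRealRankC (X : Type*) [TopologicalSpace X] [CompactSpace X] : Prop :=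
  ∀ f : ℕ → C(X, ℝ), ∀ ε : ℝ, 0 < ε →
    ∃ g : ℕ → C(X, ℝ), (∀ i, ‖f i - g i‖ < ε) ∧
      ∃ D : Finset ℕ, IsUnit (∑ i ∈ D, g i ^ 2)

/-!
Take Urysohn functions `fᵢ` equal to `-1` on `Fᵢ` and `1` on `Hᵢ`, and perturb them by less
than `1` to functions `gᵢ` with `∑_{i ∈ D} gᵢ²` invertible. Then `gᵢ < 0` on `Fᵢ` and
`gᵢ > 0` on `Hᵢ`, so the zero set of `gᵢ` is a partition between `Fᵢ` and `Hᵢ`; and the zero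
sets of the `gᵢ`, `i ∈ D`, have no common point, since `∑_{i ∈ D} gᵢ²` vanishes there.
-/

open Set

theorem exists_continuousMap_eqOn_neg_one_eqOn_one {X : Type*} [TopologicalSpace X]
    [NormalSpace X] {F H : Set X} (hF : IsClosed F) (hH : IsClosed H) (hFH : Disjoint F H) :
    ∃ f : C(X, ℝ), EqOn f (-1) F ∧ EqOn f 1 H := by
  obtain ⟨f, hfF, hfH, -⟩ :=
    exists_bounded_mem_Icc_of_closed_of_le hF hH hFH (neg_le_self zero_le_one)
  exact ⟨f.toContinuousMap, hfF, hfH⟩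

theorem isPartitionBetween_preimage_zero {X : Type*} [TopologicalSpace X] {F H : Set X}
    (g : C(X, ℝ)) (hF : ∀ x ∈ F, g x < 0) (hH : ∀ x ∈ H, 0 < g x) :
    IsPartitionBetween (g ⁻¹' {0}) F H := by
  refine ⟨isClosed_singleton.preimage g.continuous, {x | g x < 0}, {x | 0 < g x},
    isOpen_lt g.continuous continuous_const, isOpen_lt continuous_const g.continuous,
    ?_, hF, hH, ?_⟩
  · ext x
    simpa using fun h₁ : g x < 0 => h₁.le
  · ext x
    simp

theorem ContinuousMap.lt_zero_of_norm_sub_lt_one {X : Type*} [TopologicalSpace X]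
    [CompactSpace X] {f g : C(X, ℝ)} (hfg : ‖f - g‖ < 1) {x : X} (hx : f x = -1) : g x < 0 := by
  have := (abs_lt.mp (((f - g).norm_coe_le_norm x).trans_lt hfg)).1
  simp only [sub_apply, hx] at this
  linarith

theorem ContinuousMap.pos_of_norm_sub_lt_one {X : Type*} [TopologicalSpace X]
    [CompactSpace X] {f g : C(X, ℝ)} (hfg : ‖f - g‖ < 1) {x : X} (hx : f x = 1) : 0 < g x := by
  have := (abs_lt.mp (((f - g).norm_coe_le_norm x).trans_lt hfg)).2
  simp only [sub_apply, hx] at this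
  linarith

theorem ContinuousMap.iInter_preimage_zero_eq_empty_of_isUnit_sum_sq {X ι : Type*}
    [TopologicalSpace X] {g : ι → C(X, ℝ)} {D : Finset ι} (hD : IsUnit (∑ i ∈ D, g i ^ 2)) :
    ⋂ i, g i ⁻¹' {0} = ∅ := by
  refine eq_empty_of_forall_notMem fun x hx => (isUnit_iff_forall_ne_zero _).mp hD x ?_
  simp only [mem_iInter, mem_preimage, mem_singleton_iff] at hx
  simp [hx]

theorem stmt_13 {X : Type*} [TopologicalSpace X] [CompactSpace X] [T2Space X]
    (h : WeaklyInfiniteRealRankC X) : WeaklyInfiniteDimensional X := by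
  intro F H hFH
  choose f hfF hfH using fun i => exists_continuousMap_eqOn_neg_one_eqOn_one
    (hFH i).1 (hFH i).2.1 (disjoint_iff_inter_eq_empty.mpr (hFH i).2.2)
  obtain ⟨g, hfg, D, hD⟩ := h f 1 one_pos
  refine ⟨fun i => g i ⁻¹' {0}, fun i => ?_,
    ContinuousMap.iInter_preimage_zero_eq_empty_of_isUnit_sum_sq hD⟩
  exact isPartitionBetween_preimage_zero (g i)
    (fun x hx => ContinuousMap.lt_zero_of_norm_sub_lt_one (hfg i) (hfF i hx))
    (fun x hx => ContinuousMap.pos_of_norm_sub_lt_one (hfg i) (hfH i hx))
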